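/- For every weight w and every dyadic interval J, (1/|J|) ∑_{I ∈ D(J)} |I| (Δ_I w)² / ⟨w⟩_I³ ≤ ⟨w^{-1}⟩_J, where Δ_I w = (⟨w⟩_{I₊} − ⟨w⟩_{I₋})/2. -/

import Mathlib

open MeasureTheory Set

/-- A dyadic interval `[k·2⁻ⁿ, (k+1)·2⁻ⁿ)`. -/
structure DyadicI where
  n : ℤ
  k : ℤ

namespace DyadicI

noncomputable def len (I : DyadicI) : ℝ := (2:ℝ) ^ (-I.n)

noncomputable def left (I : DyadicI) : ℝ := I.k * I.len

noncomputable def set (I : DyadicI) : Set ℝ := Set.Ico I.left (I.left + I.len)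

/-- left half -/
def minus (I : DyadicI) : DyadicI := ⟨I.n + 1, 2 * I.k⟩

/-- right half -/
def plus (I : DyadicI) : DyadicI := ⟨I.n + 1, 2 * I.k + 1⟩

/-- dyadic parent -/
def parent (I : DyadicI) : DyadicI := ⟨I.n - 1, Int.fdiv I.k 2⟩

/-- `w(I) = ∫_I w` -/
noncomputable def intg (w : ℝ → ℝ) (I : DyadicI) : ℝ := ∫ x in I.set, w x

/-- `⟨w⟩_I = |I|⁻¹ ∫_I w` -/
noncomputable def avg (w : ℝ → ℝ) (I : DyadicI) : ℝ := (∫ x in I.set, w x) / I.len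

/-- Haar function `h_I = |I|^{-1/2}(χ_{I₊} - χ_{I₋})` -/
noncomputable def haar (I : DyadicI) : ℝ → ℝ := fun x =>
  (1 / Real.sqrt I.len) *
    (I.plus.set.indicator (fun _ => (1:ℝ)) x - I.minus.set.indicator (fun _ => (1:ℝ)) x)

/-- weighted Haar function `h^w_I` -/
noncomputable def whaar (w : ℝ → ℝ) (I : DyadicI) : ℝ → ℝ := fun x =>
  (1 / Real.sqrt (intg w I)) *
    (Real.sqrt (intg w I.minus / intg w I.plus) * I.plus.set.indicator (fun _ => (1:ℝ)) x
      - Real.sqrt (intg w I.plus / intg w I.minus) * I.minus.set.indicator (fun _ => (1:ℝ)) x)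

/-- `Δ_I w = (⟨w⟩_{I₊} − ⟨w⟩_{I₋})/2` -/
noncomputable def del (w : ℝ → ℝ) (I : DyadicI) : ℝ := (avg w I.plus - avg w I.minus) / 2

end DyadicI

/-- weighted inner product `⟨f,g⟩_w = ∫ f g w` -/
noncomputable def wip (w f g : ℝ → ℝ) : ℝ := ∫ x, f x * g x * w x

/-- a weight: locally integrable and positive a.e. -/
def IsWeight (w : ℝ → ℝ) : Prop :=
  MeasureTheory.LocallyIntegrable w ∧ ∀ᵐ x ∂(volume : Measure ℝ), 0 < w x

noncomputable def winv (w : ℝ → ℝ) : ℝ → ℝ := fun x => (w x)⁻¹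

/-- membership in dyadic A₂ -/
def MemA2d (w : ℝ → ℝ) : Prop :=
  BddAbove (Set.range fun I : DyadicI => DyadicI.avg w I * DyadicI.avg (winv w) I)

/-- the dyadic A₂ characteristic `[w]_{A₂^d}` -/
noncomputable def A2d (w : ℝ → ℝ) : ℝ :=
  ⨆ I : DyadicI, DyadicI.avg w I * DyadicI.avg (winv w) I

/-- the dyadic BMO norm -/
noncomputable def bmoD (b : ℝ → ℝ) : ℝ :=
  ⨆ I : DyadicI, (∫ x in I.set, |b x - DyadicI.avg b I|) / I.len

/-- membership in dyadic BMO -/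
def MemBMOd (b : ℝ → ℝ) : Prop :=
  BddAbove (Set.range fun I : DyadicI => (∫ x in I.set, |b x - DyadicI.avg b I|) / I.len)

/-!
Let `a`, `b` be the averages of `w` over the halves of `I` and `m = (a + b)/2` its average over `I`.
Convexity of `x ↦ 1/x` holds with a quantitative gap: `((b - a)/2)² / m³ ≤ (1/a + 1/b)/2 - 1/m`.
Multiplied by `|I|`, this bounds the `I`-th summand by the increase of `∑ |I'| / ⟨w⟩_{I'}` when `I`
is replaced by its two halves. Hence the summands over the first `N` generations of subintervals of
`J` add up to at most `∑_{I' of generation N} |I'| / ⟨w⟩_{I'} - |J| / ⟨w⟩_J`, and Jensen's inequality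
`|I'| / ⟨w⟩_{I'} ≤ ∫_{I'} w⁻¹` bounds this by `∫_J w⁻¹ = |J| ⟨w⁻¹⟩_J`.
-/

lemma sq_half_sub_div_cube_le_inv_midpoint {a b : ℝ} (ha : 0 < a) (hb : 0 < b) :
    ((b - a) / 2) ^ 2 / ((a + b) / 2) ^ 3 ≤ (a⁻¹ + b⁻¹) / 2 - ((a + b) / 2)⁻¹ := by
  have hm : 0 < (a + b) / 2 := by positivity
  have hgap : (a⁻¹ + b⁻¹) / 2 - ((a + b) / 2)⁻¹ = ((b - a) / 2) ^ 2 / (a * b * ((a + b) / 2)) := by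
    field_simp
    ring
  rw [hgap]
  gcongr
  nlinarith [mul_nonneg hm.le (sq_nonneg (a - b))]

lemma two_mul_sub_sq_mul_le_inv {x : ℝ} (hx : 0 < x) (t : ℝ) : 2 * t - t ^ 2 * x ≤ x⁻¹ := by
  have hgap : x⁻¹ - (2 * t - t ^ 2 * x) = (1 - t * x) ^ 2 / x := by
    field_simp
    ring
  rw [← sub_nonneg, hgap]
  positivity

section Integral

variable {α : Type*} [MeasurableSpace α] {μ : Measure α} {w : α → ℝ}

lemma integral_pos_of_ae_pos (hμ : μ ≠ 0) (hpos : ∀ᵐ x ∂μ, 0 < w x) (hw : Integrable w μ) :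
    0 < ∫ x, w x ∂μ := by
  rw [integral_pos_iff_support_of_nonneg_ae (hpos.mono fun _ hx ↦ hx.le) hw, pos_iff_ne_zero]
  intro hsupp
  refine hμ (ae_eq_bot.1 (Filter.eventually_false_iff_eq_bot.1 ?_))
  filter_upwards [hpos, measure_eq_zero_iff_ae_notMem.1 hsupp] with x hx hx'
  exact hx' hx.ne'

lemma two_mul_sub_sq_mul_integral_le_integral_inv [IsFiniteMeasure μ] (hpos : ∀ᵐ x ∂μ, 0 < w x)
    (hw : Integrable w μ) (hinv : Integrable (fun x ↦ (w x)⁻¹) μ) (t : ℝ) :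
    2 * t * μ.real univ - t ^ 2 * ∫ x, w x ∂μ ≤ ∫ x, (w x)⁻¹ ∂μ := by
  calc 2 * t * μ.real univ - t ^ 2 * ∫ x, w x ∂μ = ∫ x, (2 * t - t ^ 2 * w x) ∂μ := by
        rw [integral_sub (integrable_const _) (hw.const_mul _), integral_const, integral_const_mul,
          smul_eq_mul, mul_comm (μ.real univ)]
    _ ≤ ∫ x, (w x)⁻¹ ∂μ :=
        integral_mono_ae ((integrable_const _).sub (hw.const_mul _)) hinv
          (hpos.mono fun _ hx ↦ two_mul_sub_sq_mul_le_inv hx t)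

end Integral

deriving instance DecidableEq for DyadicI

namespace DyadicI

lemma len_pos (I : DyadicI) : 0 < I.len := zpow_pos two_pos _

lemma len_minus (I : DyadicI) : I.minus.len = I.len / 2 := by
  rw [len, len, minus, neg_add, zpow_add₀ two_ne_zero, zpow_neg_one, div_eq_mul_inv]

lemma len_plus (I : DyadicI) : I.plus.len = I.len / 2 := I.len_minus

lemma left_minus (I : DyadicI) : I.minus.left = I.left := by
  rw [left, len_minus, left]
  simp only [minus]
  push_cast
  ring

lemma left_plus (I : DyadicI) : I.plus.left = I.left + I.len / 2 := by
  rw [left, len_plus, left]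
  simp only [plus]
  push_cast
  ring

lemma set_eq_union (I : DyadicI) : I.set = I.minus.set ∪ I.plus.set := by
  have := I.len_pos
  rw [set, set, set, left_minus, left_plus, len_minus, len_plus,
    Ico_union_Ico_eq_Ico (by linarith) (by linarith)]
  ring_nf

lemma disjoint_minus_plus (I : DyadicI) : Disjoint I.minus.set I.plus.set := by
  rw [set, set, left_minus, left_plus, len_minus, len_plus]
  exact Ico_disjoint_Ico_same

lemma minus_subset (I : DyadicI) : I.minus.set ⊆ I.set := I.set_eq_union ▸ subset_union_left

lemma plus_subset (I : DyadicI) : I.plus.set ⊆ I.set := I.set_eq_union ▸ subset_union_right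

lemma set_nonempty (I : DyadicI) : I.set.Nonempty := nonempty_Ico.2 (by linarith [I.len_pos])

lemma set_subset_set_iff {I J : DyadicI} :
    I.set ⊆ J.set ↔ J.left ≤ I.left ∧ I.left + I.len ≤ J.left + J.len :=
  Ico_subset_Ico_iff (by linarith [I.len_pos])

lemma n_le_of_subset {I J : DyadicI} (h : I.set ⊆ J.set) : J.n ≤ I.n := by
  obtain ⟨h₁, h₂⟩ := set_subset_set_iff.1 h
  have hlen : (2 : ℝ) ^ (-I.n) ≤ 2 ^ (-J.n) := by
    change I.len ≤ J.len
    linarith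
  have := (zpow_le_zpow_iff_right₀ one_lt_two).1 hlen
  omega

lemma eq_of_subset_of_n_eq {I J : DyadicI} (h : I.set ⊆ J.set) (hn : I.n = J.n) : I = J := by
  obtain ⟨h₁, h₂⟩ := set_subset_set_iff.1 h
  have hlen : I.len = J.len := by rw [len, len, hn]
  have hleft : I.left = J.left := by linarith
  rw [left, left, hlen] at hleft
  have hk : I.k = J.k := by exact_mod_cast mul_right_cancel₀ J.len_pos.ne' hleft
  cases I
  cases J
  simp_all

lemma left_add_len_le_of_left_lt {I K : DyadicI} (hn : K.n ≤ I.n) (h : I.left < K.left) :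
    I.left + I.len ≤ K.left := by
  obtain ⟨d, hd⟩ := Int.eq_ofNat_of_zero_le (sub_nonneg.2 hn)
  have hK : K.left = ((K.k * 2 ^ d : ℤ) : ℝ) * I.len := by
    rw [left, len, len, show -K.n = d + -I.n by omega, zpow_add₀ two_ne_zero, zpow_natCast]
    push_cast
    ring
  rw [hK, left] at h ⊢
  have hk : I.k < K.k * 2 ^ d := by exact_mod_cast lt_of_mul_lt_mul_right h I.len_pos.le
  have hk' : (I.k : ℝ) + 1 ≤ ((K.k * 2 ^ d : ℤ) : ℝ) := by exact_mod_cast hk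
  nlinarith [I.len_pos]

lemma subset_minus_or_subset_plus {I J : DyadicI} (h : I.set ⊆ J.set) (hn : J.n < I.n) :
    I.set ⊆ J.minus.set ∨ I.set ⊆ J.plus.set := by
  obtain ⟨h₁, h₂⟩ := set_subset_set_iff.1 h
  rcases le_or_gt J.plus.left I.left with hle | hlt
  · right
    rw [set_subset_set_iff, left_plus, len_plus]
    rw [left_plus] at hle
    exact ⟨hle, by linarith⟩
  · left
    have := left_add_len_le_of_left_lt (by simp only [plus]; omega) hlt
    rw [set_subset_set_iff, left_minus, len_minus]
    rw [left_plus] at this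
    exact ⟨h₁, by linarith⟩

section Weight

variable {w : ℝ → ℝ}

lemma integrableOn_set (hw : LocallyIntegrable w) (I : DyadicI) : IntegrableOn w I.set :=
  (hw.integrableOn_isCompact isCompact_Icc).mono_set Ico_subset_Icc_self

lemma intg_eq_add (hw : LocallyIntegrable w) (I : DyadicI) :
    intg w I = intg w I.minus + intg w I.plus := by
  rw [intg, I.set_eq_union, setIntegral_union I.disjoint_minus_plus measurableSet_Ico
    (integrableOn_set hw _) (integrableOn_set hw _), intg, intg]

lemma avg_eq_add_div_two (hw : LocallyIntegrable w) (I : DyadicI) :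
    avg w I = (avg w I.minus + avg w I.plus) / 2 := by
  have h := intg_eq_add hw I
  rw [intg, intg, intg] at h
  rw [avg, avg, avg, h, len_minus, len_plus]
  field_simp

lemma avg_pos (hw : IsWeight w) (I : DyadicI) : 0 < avg w I := by
  refine div_pos (integral_pos_of_ae_pos ?_ (ae_restrict_of_ae hw.2) (integrableOn_set hw.1 I))
    I.len_pos
  rw [Ne, Measure.restrict_eq_zero, set, Real.volume_Ico, ENNReal.ofReal_eq_zero, not_le]
  linarith [I.len_pos]

lemma len_div_avg_le_intg_winv (hw : IsWeight w) (hwi : LocallyIntegrable (winv w))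
    (J : DyadicI) : J.len / avg w J ≤ intg (winv w) J := by
  have : IsFiniteMeasure (volume.restrict J.set) := Real.isFiniteMeasure_restrict_Ico _ _
  have hJ := two_mul_sub_sq_mul_integral_le_integral_inv (ae_restrict_of_ae hw.2)
    (integrableOn_set hw.1 J) (integrableOn_set hwi J) (avg w J)⁻¹
  have hvol : (volume.restrict J.set).real univ = J.len := by
    rw [measureReal_restrict_apply_univ, set, Real.volume_real_Ico_of_le (by linarith [J.len_pos])]
    ring
  have hint : ∫ x in J.set, w x = avg w J * J.len := (div_mul_cancel₀ _ J.len_pos.ne').symm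
  rw [hvol, hint] at hJ
  have := (avg_pos hw J).ne'
  calc J.len / avg w J = 2 * (avg w J)⁻¹ * J.len - (avg w J)⁻¹ ^ 2 * (avg w J * J.len) := by
        field_simp
        ring
    _ ≤ intg (winv w) J := hJ

noncomputable def summand (w : ℝ → ℝ) (I : DyadicI) : ℝ := I.len * del w I ^ 2 / avg w I ^ 3

lemma summand_nonneg (hw : IsWeight w) (I : DyadicI) : 0 ≤ summand w I := by
  have := avg_pos hw I
  have := I.len_pos
  unfold summand
  positivity

lemma summand_add_len_div_avg_le (hw : IsWeight w) (I : DyadicI) :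
    summand w I + I.len / avg w I ≤ I.minus.len / avg w I.minus + I.plus.len / avg w I.plus := by
  have key := sq_half_sub_div_cube_le_inv_midpoint (avg_pos hw I.minus) (avg_pos hw I.plus)
  rw [summand, del, avg_eq_add_div_two hw.1 I, len_minus, len_plus]
  set a := avg w I.minus
  set b := avg w I.plus
  calc _ = I.len * (((b - a) / 2) ^ 2 / ((a + b) / 2) ^ 3) + I.len * ((a + b) / 2)⁻¹ := by ring
    _ ≤ I.len * ((a⁻¹ + b⁻¹) / 2 - ((a + b) / 2)⁻¹) + I.len * ((a + b) / 2)⁻¹ := by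
        gcongr
        exact I.len_pos.le
    _ = _ := by ring

end Weight

/-- `J` and its dyadic subintervals of generation `< N`, `J` itself being generation `0`. -/
def descendants : ℕ → DyadicI → Finset DyadicI
  | 0, _ => ∅
  | N + 1, J => insert J (descendants N J.minus ∪ descendants N J.plus)

lemma subset_and_n_le_of_mem_descendants {N : ℕ} {I J : DyadicI} (h : I ∈ descendants N J) :
    I.set ⊆ J.set ∧ J.n ≤ I.n := by
  induction N generalizing J with
  | zero => simp [descendants] at h
  | succ N ih =>
    simp only [descendants, Finset.mem_insert, Finset.mem_union] at h
    rcases h with rfl | h | h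
    · exact ⟨subset_rfl, le_rfl⟩
    · obtain ⟨hs, hn⟩ := ih h
      exact ⟨hs.trans J.minus_subset, by simp only [minus] at hn; omega⟩
    · obtain ⟨hs, hn⟩ := ih h
      exact ⟨hs.trans J.plus_subset, by simp only [plus] at hn; omega⟩

lemma mem_descendants_of_subset {N : ℕ} {I J : DyadicI} (h : I.set ⊆ J.set) (hn : I.n < J.n + N) :
    I ∈ descendants N J := by
  induction N generalizing J with
  | zero => have := n_le_of_subset h; omega
  | succ N ih =>
    rw [descendants, Finset.mem_insert, Finset.mem_union]
    rcases (n_le_of_subset h).eq_or_lt with heq | hlt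
    · exact Or.inl (eq_of_subset_of_n_eq h heq.symm)
    · rcases subset_minus_or_subset_plus h hlt with hs | hs
      · exact Or.inr (Or.inl (ih hs (by simp only [minus]; omega)))
      · exact Or.inr (Or.inr (ih hs (by simp only [plus]; omega)))

lemma disjoint_descendants_minus_plus (N : ℕ) (J : DyadicI) :
    Disjoint (descendants N J.minus) (descendants N J.plus) := by
  refine Finset.disjoint_left.2 fun I h₁ h₂ ↦ ?_
  obtain ⟨x, hx⟩ := I.set_nonempty
  exact J.disjoint_minus_plus.notMem_of_mem_left
    ((subset_and_n_le_of_mem_descendants h₁).1 hx) ((subset_and_n_le_of_mem_descendants h₂).1 hx)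

lemma notMem_descendants_minus_union_plus (N : ℕ) (J : DyadicI) :
    J ∉ descendants N J.minus ∪ descendants N J.plus := by
  rw [Finset.mem_union, not_or]
  constructor <;> intro h <;>
    have := (subset_and_n_le_of_mem_descendants h).2 <;> simp only [minus, plus] at this <;> omega

lemma sum_summand_descendants_le {w : ℝ → ℝ} (hw : IsWeight w) (hwi : LocallyIntegrable (winv w))
    (N : ℕ) (J : DyadicI) :
    ∑ I ∈ descendants N J, summand w I ≤ intg (winv w) J - J.len / avg w J := by
  induction N generalizing J with
  | zero => simpa [descendants] using len_div_avg_le_intg_winv hw hwi J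
  | succ N ih =>
    rw [descendants, Finset.sum_insert (notMem_descendants_minus_union_plus N J),
      Finset.sum_union (disjoint_descendants_minus_plus N J), intg_eq_add hwi]
    linarith [ih J.minus, ih J.plus, summand_add_len_div_avg_le hw J]

lemma sum_summand_le_intg_winv {w : ℝ → ℝ} (hw : IsWeight w) (hwi : LocallyIntegrable (winv w))
    {J : DyadicI} (s : Finset DyadicI) (hs : ∀ I ∈ s, I.set ⊆ J.set) :
    ∑ I ∈ s, summand w I ≤ intg (winv w) J := by
  set N := s.sup (fun I ↦ (I.n - J.n).toNat) + 1
  have hsub : s ⊆ descendants N J := fun I hI ↦ mem_descendants_of_subset (hs I hI) <| by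
    have := Finset.le_sup (f := fun I ↦ (I.n - J.n).toNat) hI
    omega
  calc ∑ I ∈ s, summand w I ≤ ∑ I ∈ descendants N J, summand w I :=
        Finset.sum_le_sum_of_subset_of_nonneg hsub fun I _ _ ↦ summand_nonneg hw I
    _ ≤ intg (winv w) J - J.len / avg w J := sum_summand_descendants_le hw hwi N J
    _ ≤ intg (winv w) J := sub_le_self _ (div_pos J.len_pos (avg_pos hw J)).le

end DyadicI

/-- `(1/|J|) ∑_{I⊆J} |I| (Δ_I w)²/⟨w⟩_I³ ≤ ⟨w⁻¹⟩_J`. -/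
theorem stmt6 (w : ℝ → ℝ) (hw : IsWeight w)
    (hwi : MeasureTheory.LocallyIntegrable (winv w)) (J : DyadicI) :
    (1 / J.len) * ∑' I : {I : DyadicI // I.set ⊆ J.set},
        I.1.len * (DyadicI.del w I.1) ^ 2 / (DyadicI.avg w I.1) ^ 3
      ≤ DyadicI.avg (winv w) J := by
  have hsum : ∑' I : {I : DyadicI // I.set ⊆ J.set}, DyadicI.summand w I.1
      ≤ DyadicI.intg (winv w) J :=
    Real.tsum_le_of_sum_le (fun I ↦ DyadicI.summand_nonneg hw I.1) fun u ↦ by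
      simpa only [Finset.sum_map, Function.Embedding.subtype_apply] using
        DyadicI.sum_summand_le_intg_winv hw hwi (u.map (Function.Embedding.subtype _))
          fun I hI ↦ by
            obtain ⟨I, -, rfl⟩ := Finset.mem_map.1 hI
            exact I.2
  rw [one_div_mul_eq_div, DyadicI.avg, div_le_div_iff_of_pos_right J.len_pos]
  exact hsum
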